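/- Assume w·(f-g)·(f̄-g) = v·(v-δ)·B(g) and w·(f-g-v)·(f̄-g-v+δ) = v·(v-δ)·A(g+v). Then the polynomial N*(X) := (X-f̄)·(X-g)·(X-g-δ)·A(X) + (X-f̄-δ)·V(X) in ℂ[X], where V(X) = B(X)(X-g-v)(X-g-v+δ) - w(X-f)(X-f̄), vanishes at X = g and at X = g+v. If moreover v ≠ 0, then N* is divisible in ℂ[X] by (X-g)(X-g-v) and the quotient is a polynomial of degree at most 5; equivalently, the coefficient of ȳ(x) in (x-f̄)(x-f̄-δ)·L₁*(x) is a polynomial of degree at most 5 in x (the coefficients of ȳ(x+δ) and ȳ(x-δ) being (x-f̄-δ)A(x+δ) and (x-f̄)B(x-δ)). -/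

import Mathlib

/-!
At `X = g` only the `V`-term of `N*` survives, and `V(g) = v(v-δ)B(g) - w(f-g)(f̄-g)` vanishes by
the first relation. At `X = g + v` the `B`-part of `V` dies, both remaining terms carry the factor
`g + v - f̄`, and what is left is `v(v-δ)A(g+v) - w(f-g-v)(f̄-g-v+δ)`, zero by the second relation.
As `N*` has degree at most `7`, removing the two distinct roots leaves a quotient of degree `≤ 5`.
-/

open Polynomial

theorem exists_eq_X_sub_C_mul_X_sub_C_mul_of_isRoot {K : Type*} [Field K] {p : K[X]} {a b : K}
    {n : ℕ} (hab : a ≠ b) (ha : p.IsRoot a) (hb : p.IsRoot b) (hp : p.natDegree ≤ n + 2) :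
    ∃ Q : K[X], p = (X - C a) * (X - C b) * Q ∧ Q.degree ≤ n := by
  obtain ⟨Q, rfl⟩ := (isCoprime_X_sub_C_of_isUnit_sub (sub_ne_zero.2 hab).isUnit).mul_dvd
    (dvd_iff_isRoot.2 ha) (dvd_iff_isRoot.2 hb)
  refine ⟨Q, rfl, degree_le_of_natDegree_le ?_⟩
  rcases eq_or_ne Q 0 with rfl | hQ
  · simp
  have hm : ((X - C a) * (X - C b)).Monic := (monic_X_sub_C a).mul (monic_X_sub_C b)
  rw [hm.natDegree_mul' (by simpa using hQ), (monic_X_sub_C a).natDegree_mul (monic_X_sub_C b),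
    natDegree_X_sub_C, natDegree_X_sub_C] at hp
  omega

theorem dE7_L1star_middle_coefficient_polynomial_general
    (δ a₁ a₂ a₃ a₄ b₁ b₂ b₃ b₄ : ℂ)
    (v : ℂ)
    (f g fbar w : ℂ)
    (hw1 : w * (f - g) * (fbar - g)
        = v * (v - δ) * ((g - b₁) * (g - b₂) * (g - b₃) * (g - b₄)))
    (hw2 : w * (f - g - v) * (fbar - g - v + δ)
        = v * (v - δ) * ((g + v - a₁) * (g + v - a₂) * (g + v - a₃) * (g + v - a₄)))
    (V : Polynomial ℂ)
    (hV : V = (X - C b₁) * (X - C b₂) * (X - C b₃) * (X - C b₄)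
            * (X - C g - C v) * (X - C g - C v + C δ)
        - C w * (X - C f) * (X - C fbar))
    (Nstar : Polynomial ℂ)
    (hN : Nstar = (X - C fbar) * (X - C g) * (X - C g - C δ)
            * ((X - C a₁) * (X - C a₂) * (X - C a₃) * (X - C a₄))
        + (X - C fbar - C δ) * V) :
    Nstar.eval g = 0 ∧ Nstar.eval (g + v) = 0
    ∧ (v ≠ 0 → ∃ Q : Polynomial ℂ,
        Nstar = (X - C g) * (X - C g - C v) * Q ∧ Q.degree ≤ 5) := by
  have hg : Nstar.IsRoot g := by
    simp only [hN, hV, IsRoot, eval_add, eval_mul, eval_sub, eval_X, eval_C]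
    linear_combination (fbar + δ - g) * hw1
  have hgv : Nstar.IsRoot (g + v) := by
    simp only [hN, hV, IsRoot, eval_add, eval_mul, eval_sub, eval_X, eval_C]
    linear_combination (fbar - g - v) * hw2
  refine ⟨hg, hgv, fun hv0 => ?_⟩
  have hdeg : Nstar.natDegree ≤ 5 + 2 := by rw [hN, hV]; compute_degree
  simpa only [C_add, sub_add_eq_sub_sub, Nat.cast_ofNat] using
    exists_eq_X_sub_C_mul_X_sub_C_mul_of_isRoot (by simpa using hv0) hg hgv hdeg

/-- under the two `w`-relations, the numerator polynomial `N*(X)` of the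
`ȳ(x)`-coefficient of `(x-f̄)(x-f̄-δ)L₁*(x)` vanishes at `X = g` and `X = g+v`, and (if
`v ≠ 0`) is divisible by `(X-g)(X-g-v)` with quotient of degree at most `5`. -/
theorem dE7_L1star_middle_coefficient_polynomial
    (δ a₁ a₂ a₃ a₄ b₁ b₂ b₃ b₄ : ℂ)
    (hcons : a₁ - a₂ - a₃ + a₄ + b₁ + b₂ - b₃ + b₄ + δ = 0)
    (v : ℂ) (hv : v = a₁ + a₄ - b₃)
    (f g fbar w : ℂ)
    (hw1 : w * (f - g) * (fbar - g)
        = v * (v - δ) * ((g - b₁) * (g - b₂) * (g - b₃) * (g - b₄)))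
    (hw2 : w * (f - g - v) * (fbar - g - v + δ)
        = v * (v - δ) * ((g + v - a₁) * (g + v - a₂) * (g + v - a₃) * (g + v - a₄)))
    (V : Polynomial ℂ)
    (hV : V = (X - C b₁) * (X - C b₂) * (X - C b₃) * (X - C b₄)
            * (X - C g - C v) * (X - C g - C v + C δ)
        - C w * (X - C f) * (X - C fbar))
    (Nstar : Polynomial ℂ)
    (hN : Nstar = (X - C fbar) * (X - C g) * (X - C g - C δ)
            * ((X - C a₁) * (X - C a₂) * (X - C a₃) * (X - C a₄))
        + (X - C fbar - C δ) * V) :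
    Nstar.eval g = 0 ∧ Nstar.eval (g + v) = 0
    ∧ (v ≠ 0 → ∃ Q : Polynomial ℂ,
        Nstar = (X - C g) * (X - C g - C v) * Q ∧ Q.degree ≤ 5) :=
  dE7_L1star_middle_coefficient_polynomial_general δ a₁ a₂ a₃ a₄ b₁ b₂ b₃ b₄ v f g fbar w hw1 hw2 V
    hV Nstar hN
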